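/- Let Z be a J-poset and let z, w ∈ Z₁ be distinct. For u ∈ Z₁ let K_{Str_F Z}(u) denote the set of all (K, {b}) ∈ Str_F Z such that u ∈ K and mub(K) = {b}. Then K_{Str_F Z}(z) is not a subset of K_{Str_F Z}(w). -/

import Mathlib

open Order Set

/-- The minimal upper bound set of `A`: the minimal elements of the set of upper bounds. -/
def mub (X : Type*) [PartialOrder X] (A : Set X) : Set X :=
  {x ∈ upperBounds A | ∀ y ∈ upperBounds A, ¬ y < x}

/-- The set of elements of height `i` in `X`. -/
def level (X : Type*) [PartialOrder X] (i : ℕ) : Set X :=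
  {x : X | Order.height x = (i : ℕ∞)}

/-- A J-poset: a countable poset with a unique minimal element satisfying (J1)-(J4). -/
structure IsJPoset (X : Type*) [PartialOrder X] : Prop where
  countable : Countable X
  uniqueMin : ∃! x : X, IsMin x
  dim2 : Order.krullDim X = 2
  mubFinite : ∀ A : Set X, A.Nonempty → (mub X A).Finite
  j2 : ∀ x ∈ level X 1, {z : X | x < z}.Infinite
  j3 : ∀ m ∈ level X 2, ∀ F : Set X, F ⊆ level X 1 → F.Finite →
        ∃ K : Set X, K ⊆ level X 1 ∧ K.Finite ∧ Disjoint K F ∧ mub X K = {m}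
  j4 : ∀ T : Set X, T ⊆ level X 2 → T.Finite → T.Nonempty →
        ∃ t ∈ level X 1, ∀ m ∈ T, t < m

/-- `(A, B)` is a member of `Str X`. -/
def StrMem (X : Type*) [PartialOrder X] (A B : Set X) : Prop :=
  A ⊆ level X 1 ∧ B ⊆ level X 2 ∧
  ((A.Finite ∧ A.Nonempty ∧ B.Finite ∧ B.Nonempty) ∨
    (∃ x, x ∈ level X 1 ∧ A = {x} ∧ B = {z ∈ level X 2 | x < z})) ∧
  (∃ a ∈ A, ∀ b ∈ B, a < b)

/-- `(C, D)` dominates `(A, B)` via `W`. -/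
def Dominates (X : Type*) [PartialOrder X] (C D A B W : Set X) : Prop :=
  A ⊂ C ∧ D ⊆ B ∧ W ⊆ C ∧ W.Nonempty ∧
  (∀ w ∈ W, ∀ d ∈ D, w < d) ∧
  (∀ a ∈ A, ∀ m : X, a < m → (∀ w ∈ W, w < m) → m ∈ D)

/-- The order on `Str X`: `(A,B) ≤ (C,D)`. -/
def StrLE (X : Type*) [PartialOrder X] (A B C D : Set X) : Prop :=
  (A = C ∧ B = D) ∨ ∃ W : Set X, Dominates X C D A B W

/-- The strict order on `Str X`: `(A,B) < (C,D)`. -/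
def StrLT (X : Type*) [PartialOrder X] (A B C D : Set X) : Prop :=
  StrLE X A B C D ∧ ¬(A = C ∧ B = D)

/-- `ℓ(A,B)`: the number of `a ∈ A` with `a < b` for all `b ∈ B`. -/
noncomputable def ell (X : Type*) [PartialOrder X] (A B : Set X) : ℕ :=
  {a ∈ A | ∀ b ∈ B, a < b}.ncard

/-- `η(A,B) = |A| - ℓ(A,B)`. -/
noncomputable def eta (X : Type*) [PartialOrder X] (A B : Set X) : ℕ :=
  A.ncard - ell X A B

/-- `Str X` as a type of pairs. -/
abbrev Str (X : Type*) [PartialOrder X] := {p : Set X × Set X // StrMem X p.1 p.2}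

def strLE {X : Type*} [PartialOrder X] (p q : Str X) : Prop :=
  StrLE X p.1.1 p.1.2 q.1.1 q.1.2

def strLT {X : Type*} [PartialOrder X] (p q : Str X) : Prop :=
  strLE p q ∧ p ≠ q

/-- Membership in `Str_F X`: members of `Str X` with both coordinates finite. -/
def StrFMem (X : Type*) [PartialOrder X] (A B : Set X) : Prop :=
  StrMem X A B ∧ A.Finite ∧ B.Finite

/-- `Str_F X` as a type of pairs. -/
abbrev StrF (X : Type*) [PartialOrder X] := {p : Set X × Set X // StrFMem X p.1 p.2}

def strFLE {X : Type*} [PartialOrder X] (p q : StrF X) : Prop :=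
  StrLE X p.1.1 p.1.2 q.1.1 q.1.2

/-- `K_{Str_F X}(z)`: all `(K, {b}) ∈ Str_F X` with `z ∈ K` and `mub K = {b}`. -/
def KSet (X : Type*) [PartialOrder X] (z : X) : Set (StrF X) :=
  {p | z ∈ p.1.1 ∧ ∃ b : X, p.1.2 = {b} ∧ mub X p.1.1 = {b}}

/-- The three-element poset `𝕀₂`: two incomparable minimal elements below one top element,
realized as the nonempty subsets of a two-element set ordered by inclusion. -/
abbrev I2 := {s : Set (Fin 2) // s.Nonempty}

/-!
Pick `m > z` by (J2). By (J3) with `F = {w}` there is a finite `K ⊆ Z₁` avoiding `w` with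
`mub K = {m}`. Chains in a J-poset are short, so `<` is well founded and `mub K = {m}` just says
that `m` is the supremum of `K`; then `m` is also the supremum of `K ∪ {z}`, and
`(K ∪ {z}, {m})` lies in `K(z)` but not in `K(w)`.
-/

section Poset

variable {X : Type*} [PartialOrder X]

lemma wellFoundedLT_of_height_lt_top (h : ∀ x : X, height x < ⊤) : WellFoundedLT X :=
  ⟨Subrelation.wf (fun hxy => height_strictMono hxy (h _)) (InvImage.wf height wellFounded_lt)⟩

lemma IsLUB.insert_of_le {s : Set X} {a b : X} (hs : IsLUB s b) (hab : a ≤ b) :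
    IsLUB (insert a s) b := by
  rw [IsLUB, upperBounds_insert]
  exact ⟨⟨hab, hs.1⟩, fun _ hy => hs.2 hy.2⟩

lemma mem_mub_iff_minimal {A : Set X} {x : X} :
    x ∈ mub X A ↔ Minimal (· ∈ upperBounds A) x := by
  rw [minimal_iff_forall_lt]
  exact and_congr_right fun _ => ⟨fun h y hyx hy => h y hy hyx, fun h y hy hyx => h hyx hy⟩

lemma mub_eq_singleton_iff_isLUB [WellFoundedLT X] {A : Set X} {m : X} :
    mub X A = {m} ↔ IsLUB A m := by
  constructor
  · intro hA
    have hm : m ∈ mub X A := hA ▸ mem_singleton m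
    refine ⟨hm.1, fun y hy => ?_⟩
    obtain ⟨b, hby, hb⟩ := exists_minimal_le_of_wellFoundedLT _ y hy
    have hbm : b = m := by simpa [hA] using mem_mub_iff_minimal.2 hb
    exact hbm ▸ hby
  · intro hA
    ext x
    rw [mem_singleton_iff]
    refine ⟨fun hx => ?_, fun hx => hx ▸ ⟨hA.1, fun y hy hym => (hA.2 hy).not_gt hym⟩⟩
    exact ((hA.2 hx.1).lt_or_eq.resolve_left (hx.2 m hA.1)).symm

lemma strFMem_of_lt {A : Set X} {a m : X} (hA : A ⊆ level X 1) (hAfin : A.Finite) (ha : a ∈ A)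
    (hm : m ∈ level X 2) (ham : a < m) : StrFMem X A {m} :=
  ⟨⟨hA, singleton_subset_iff.2 hm, Or.inl ⟨hAfin, ⟨a, ha⟩, finite_singleton m, singleton_nonempty m⟩,
    a, ha, fun _ hb => (mem_singleton_iff.1 hb) ▸ ham⟩, hAfin, finite_singleton m⟩

end Poset

namespace IsJPoset

variable {X : Type*} [PartialOrder X]

lemma height_le_two (hX : IsJPoset X) (x : X) : height x ≤ 2 := by
  have h := height_le_krullDim x
  rw [hX.dim2] at h
  exact WithBot.coe_le_coe.1 h

lemma wellFoundedLT (hX : IsJPoset X) : WellFoundedLT X :=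
  wellFoundedLT_of_height_lt_top fun x => (hX.height_le_two x).trans_lt (by decide)

lemma mem_level_two_of_lt (hX : IsJPoset X) {x m : X} (hx : x ∈ level X 1) (hxm : x < m) :
    m ∈ level X 2 := by
  have hx : height x = 1 := hx
  have hlt : (1 : ℕ∞) < height m := hx ▸ height_strictMono hxm (by rw [hx]; decide)
  exact le_antisymm (hX.height_le_two m) (Order.add_one_le_of_lt hlt)

end IsJPoset

/-- In a J-poset `Z`, if `z, w ∈ Z₁` are distinct, then `K_{Str_F Z}(z)` is
not contained in `K_{Str_F Z}(w)`. -/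
theorem stmt_19 {Z : Type*} [PartialOrder Z] (hZ : IsJPoset Z)
    (z w : Z) (hz : z ∈ level Z 1) (hw : w ∈ level Z 1) (hzw : z ≠ w) :
    ¬ (KSet Z z ⊆ KSet Z w) := by
  have := hZ.wellFoundedLT
  obtain ⟨m, hzm⟩ := (hZ.j2 z hz).nonempty
  have hm : m ∈ level Z 2 := hZ.mem_level_two_of_lt hz hzm
  obtain ⟨K, hK, hKfin, hKw, hKm⟩ :=
    hZ.j3 m hm {w} (singleton_subset_iff.2 hw) (finite_singleton w)
  have hlub : IsLUB (insert z K) m := (mub_eq_singleton_iff_isLUB.1 hKm).insert_of_le hzm.le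
  have hmem : StrFMem Z (insert z K) {m} :=
    strFMem_of_lt (insert_subset hz hK) (hKfin.insert z) (mem_insert z K) hm hzm
  intro hsub
  have hwK : w ∈ insert z K :=
    (hsub (show (⟨(insert z K, {m}), hmem⟩ : StrF Z) ∈ KSet Z z from
      ⟨mem_insert z K, m, rfl, mub_eq_singleton_iff_isLUB.2 hlub⟩)).1
  rcases hwK with hwz | hwK
  · exact hzw hwz.symm
  · exact disjoint_left.1 hKw hwK rfl
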